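/- Let M = ⟨S, A, P, R, γ⟩ be a finite MDP with γ ∈ [0,1), let 1 < C < 2, and let π₀ be a policy with full support (π₀(a|s) > 0 for all s ∈ S, a ∈ A). Let (μₙ)ₙ≥0 be probability distributions on S with μₙ(s) > 0 for all s, and let (πₙ)ₙ≥0 be a sequence of policies such that for every n, π_{n+1} ∈ N^C(πₙ) and Σ_s μₙ(s) Σ_a π_{n+1}(a|s) A^{πₙ}(s,a) ≥ Σ_s μₙ(s) Σ_a π'(a|s) A^{πₙ}(s,a) for every policy π' ∈ N^C(πₙ). Then for every s ∈ S, the sequence V^{πₙ}(s) converges to the optimal value V*(s) := sup over all policies π of V^π(s); in particular the returns V^{πₙ}(s_I) converge to V*(s_I) for any designated initial state s_I. -/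

import Mathlib

open Finset

variable {S A : Type*} [Fintype S] [Fintype A]

/-- A (stationary, stochastic) policy: for every state, a probability
distribution over actions. -/
def IsPolicy (π : S → A → ℝ) : Prop :=
  ∀ s, (∀ a, 0 ≤ π s a) ∧ (∑ a, π s a) = 1

/-- The neighborhood `N^C(π)`. -/
def InNbhd (C : ℝ) (π π' : S → A → ℝ) : Prop :=
  IsPolicy π' ∧ (∀ s a, (0 < π s a ↔ 0 < π' s a)) ∧
    ∀ s a, 0 < π s a → (2 - C ≤ π' s a / π s a ∧ π' s a / π s a ≤ C)

/-- The optimal value `V*(s)`: the supremum over all policies of the value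
of the policy at `s` (values being the unique solutions of the Bellman
equations). -/
noncomputable def optVal (P : S → A → S → ℝ) (R : S → A → ℝ) (γ : ℝ) (s : S) : ℝ :=
  sSup { v : ℝ | ∃ (π : S → A → ℝ) (W : S → ℝ), IsPolicy π ∧
    (∀ t, W t = ∑ a, π t a * (R t a + γ * ∑ t', P t a t' * W t')) ∧ W s = v }

/-!
By the per-state optimality of `π (n + 1)` in the neighborhood (the objective separates over
states and `μ n > 0`), its surrogate gain `∑ a, π (n + 1) s a * A^{π n}(s, a)` is nonnegative,
and by the performance-difference identity `V (n + 1) - V n` dominates it. So the values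
increase, stay bounded, and converge to some `W`. If a limit advantage `A^W(s, a)` were
positive, let `G` be the set of actions maximizing it at `s`. Eventually the advantages of
`V n` rank `G` above all other actions, so by an exchange argument the mass `π n (G | s)` never
decreases, while moving the fraction `C - 1` of the mass onto `G` shows that each step gains at
least a fixed multiple of that mass, contradicting convergence. Hence `A^W ≤ 0`, so `W`
dominates the value of every policy and is the optimal value.
-/

open Filter Topology

section WeightedSum

variable {ι : Type*} [Fintype ι] {w x : ι → ℝ} {m : ℝ}

lemma le_sum_mul_of_forall_le (hw : ∀ i, 0 ≤ w i) (hw1 : ∑ i, w i = 1) (h : ∀ i, m ≤ x i) :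
    m ≤ ∑ i, w i * x i :=
  calc m = ∑ i, w i * m := by rw [← sum_mul, hw1, one_mul]
    _ ≤ ∑ i, w i * x i := sum_le_sum fun i _ => mul_le_mul_of_nonneg_left (h i) (hw i)

lemma sum_mul_le_of_forall_le (hw : ∀ i, 0 ≤ w i) (hw1 : ∑ i, w i = 1) (h : ∀ i, x i ≤ m) :
    ∑ i, w i * x i ≤ m :=
  calc ∑ i, w i * x i ≤ ∑ i, w i * m := sum_le_sum fun i _ => mul_le_mul_of_nonneg_left (h i) (hw i)
    _ = m := by rw [← sum_mul, hw1, one_mul]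

lemma sum_mul_sub_const (hw1 : ∑ i, w i = 1) (c : ℝ) :
    ∑ i, w i * (x i - c) = ∑ i, w i * x i - c := by
  simp only [mul_sub, sum_sub_distrib, ← sum_mul, hw1, one_mul]

end WeightedSum

lemma le_of_add_discounted_le {p : S → S → ℝ} (hp : ∀ s, (∀ s', 0 ≤ p s s') ∧ ∑ s', p s s' = 1)
    {γ : ℝ} (hγ0 : 0 ≤ γ) (hγ1 : γ < 1) {c D : S → ℝ} (hc : ∀ s, 0 ≤ c s)
    (hD : ∀ s, c s + γ * ∑ s', p s s' * D s' ≤ D s) (s : S) : c s ≤ D s := by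
  have : Nonempty S := ⟨s⟩
  obtain ⟨s₀, hs₀⟩ := Finite.exists_min D
  -- at a minimum point, `γ * D s₀ ≤ D s₀` forces `0 ≤ D s₀`
  have hD₀ : 0 ≤ D s₀ := by
    have := le_sum_mul_of_forall_le (hp s₀).1 (hp s₀).2 hs₀
    nlinarith [hD s₀, hc s₀]
  have := le_sum_mul_of_forall_le (hp s).1 (hp s).2 fun t => hD₀.trans (hs₀ t)
  nlinarith [hD s]

section Bellman

def IsValue (P : S → A → S → ℝ) (R : S → A → ℝ) (γ : ℝ) (π : S → A → ℝ) (W : S → ℝ) : Prop :=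
  ∀ s, W s = ∑ a, π s a * (R s a + γ * ∑ s', P s a s' * W s')

def advantage (P : S → A → S → ℝ) (R : S → A → ℝ) (γ : ℝ) (W : S → ℝ) (s : S) (a : A) : ℝ :=
  R s a + γ * (∑ s', P s a s' * W s') - W s

def policyKernel (P : S → A → S → ℝ) (π : S → A → ℝ) (s s' : S) : ℝ :=
  ∑ a, π s a * P s a s'

variable {P : S → A → S → ℝ} {R : S → A → ℝ} {γ : ℝ} {π : S → A → ℝ} {W W' : S → ℝ}

lemma policyKernel_stochastic (hP : ∀ s a, (∀ s', 0 ≤ P s a s') ∧ ∑ s', P s a s' = 1)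
    (hπ : IsPolicy π) (s : S) :
    (∀ s', 0 ≤ policyKernel P π s s') ∧ ∑ s', policyKernel P π s s' = 1 := by
  refine ⟨fun s' => sum_nonneg fun a _ => mul_nonneg ((hπ s).1 a) ((hP s a).1 s'), ?_⟩
  simp only [policyKernel]
  rw [sum_comm]
  simp only [← mul_sum, (hP s _).2, mul_one, (hπ s).2]

namespace IsValue

lemma sum_mul_advantage_self (hπ : IsPolicy π) (hW : IsValue P R γ π W) (s : S) :
    ∑ a, π s a * advantage P R γ W s a = 0 := by
  simp only [advantage]
  rw [sum_mul_sub_const (hπ s).2, ← hW s, sub_self]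

lemma sub_eq (hπ : IsPolicy π) (hW' : IsValue P R γ π W') (s : S) :
    W' s - W s = ∑ a, π s a * advantage P R γ W s a
      + γ * ∑ s', policyKernel P π s s' * (W' s' - W s') := by
  simp only [advantage, policyKernel]
  rw [sum_mul_sub_const (hπ s).2, hW' s]
  simp only [mul_add, mul_sub, sum_add_distrib, sum_sub_distrib, mul_sum, sum_mul]
  rw [sum_comm (f := fun s' a => γ * (π s a * P s a s' * W' s')),
    sum_comm (f := fun s' a => γ * (π s a * P s a s' * W s'))]
  simp only [mul_assoc, mul_left_comm γ]
  ring

lemma le_sub_of_sum_mul_advantage_nonneg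
    (hP : ∀ s a, (∀ s', 0 ≤ P s a s') ∧ ∑ s', P s a s' = 1) (hγ0 : 0 ≤ γ) (hγ1 : γ < 1)
    (hπ : IsPolicy π) (hW' : IsValue P R γ π W')
    (hgain : ∀ s, 0 ≤ ∑ a, π s a * advantage P R γ W s a) (s : S) :
    ∑ a, π s a * advantage P R γ W s a ≤ W' s - W s :=
  le_of_add_discounted_le (policyKernel_stochastic hP hπ) hγ0 hγ1 hgain
    (fun t => (hW'.sub_eq hπ t).ge) s

lemma le_of_advantage_nonpos
    (hP : ∀ s a, (∀ s', 0 ≤ P s a s') ∧ ∑ s', P s a s' = 1) (hγ0 : 0 ≤ γ) (hγ1 : γ < 1)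
    (hπ : IsPolicy π) (hW' : IsValue P R γ π W') (hadv : ∀ s a, advantage P R γ W s a ≤ 0)
    (s : S) : W' s ≤ W s := by
  have hloss : ∀ t, 0 ≤ -∑ a, π t a * advantage P R γ W t a := fun t =>
    neg_nonneg.2 (sum_nonpos fun a _ => mul_nonpos_of_nonneg_of_nonpos ((hπ t).1 a) (hadv t a))
  have hD : ∀ t, -∑ a, π t a * advantage P R γ W t a
      + γ * ∑ t', policyKernel P π t t' * (W t' - W' t') ≤ W t - W' t := fun t => by
    have hneg : ∑ t', policyKernel P π t t' * (W t' - W' t')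
        = -∑ t', policyKernel P π t t' * (W' t' - W t') := by
      rw [← sum_neg_distrib]
      exact sum_congr rfl fun t' _ => by ring
    rw [hneg, mul_neg]
    linarith [hW'.sub_eq hπ t (W := W)]
  linarith [le_of_add_discounted_le (policyKernel_stochastic hP hπ) hγ0 hγ1 hloss hD s, hloss s]

lemma le_div_of_reward_le
    (hP : ∀ s a, (∀ s', 0 ≤ P s a s') ∧ ∑ s', P s a s' = 1) (hγ0 : 0 ≤ γ) (hγ1 : γ < 1)
    {B : ℝ} (hR : ∀ s a, R s a ≤ B) (hπ : IsPolicy π) (hW : IsValue P R γ π W) (s : S) :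
    W s ≤ B / (1 - γ) := by
  have : Nonempty S := ⟨s⟩
  obtain ⟨s₀, hs₀⟩ := Finite.exists_max W
  have h : W s₀ ≤ B + γ * W s₀ :=
    calc W s₀ = ∑ a, π s₀ a * (R s₀ a + γ * ∑ s', P s₀ a s' * W s') := hW s₀
      _ ≤ B + γ * W s₀ := sum_mul_le_of_forall_le (hπ s₀).1 (hπ s₀).2 fun a =>
        add_le_add (hR s₀ a) (mul_le_mul_of_nonneg_left
          (sum_mul_le_of_forall_le (hP s₀ a).1 (hP s₀ a).2 hs₀) hγ0)
  rw [le_div_iff₀ (by linarith)]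
  nlinarith [hs₀ s]

end IsValue

lemma optVal_eq_of_tendsto
    (hP : ∀ s a, (∀ s', 0 ≤ P s a s') ∧ ∑ s', P s a s' = 1) (hγ0 : 0 ≤ γ) (hγ1 : γ < 1)
    (hadv : ∀ s a, advantage P R γ W s a ≤ 0) {π : ℕ → S → A → ℝ} {V : ℕ → S → ℝ}
    (hπ : ∀ n, IsPolicy (π n)) (hV : ∀ n, IsValue P R γ (π n) (V n)) {s : S}
    (hlim : Tendsto (fun n => V n s) atTop (𝓝 (W s))) : optVal P R γ s = W s := by
  refine IsLUB.csSup_eq ⟨?_, fun u hu => ?_⟩ ⟨V 0 s, π 0, V 0, hπ 0, hV 0, rfl⟩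
  · rintro _ ⟨π', W', hπ', hW', rfl⟩
    exact IsValue.le_of_advantage_nonpos hP hγ0 hγ1 hπ' hW' hadv s
  · exact le_of_tendsto' hlim fun n => hu ⟨π n, V n, hπ n, hV n, rfl⟩

end Bellman

section Neighborhood

-- `InNbhd C π π'` holds iff `π' s ∈ localNbhd C (π s)` for every state `s`.
def localNbhd (C : ℝ) (p : A → ℝ) : Set (A → ℝ) :=
  {q | ((∀ a, 0 ≤ q a) ∧ ∑ a, q a = 1) ∧ (∀ a, 0 < p a ↔ 0 < q a) ∧
    ∀ a, 0 < p a → 2 - C ≤ q a / p a ∧ q a / p a ≤ C}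

lemma isMaxOn_localNbhd_of_inNbhd {C : ℝ} {π π₁ : S → A → ℝ} {μ : S → ℝ} {f : S → A → ℝ}
    (hμ : ∀ s, 0 < μ s) (h₁ : InNbhd C π π₁)
    (hmax : ∀ π', InNbhd C π π' →
      ∑ s, μ s * ∑ a, π' s a * f s a ≤ ∑ s, μ s * ∑ a, π₁ s a * f s a) (s : S) :
    IsMaxOn (fun q => ∑ a, q a * f s a) (localNbhd C (π s)) (π₁ s) := by
  classical
  intro q hq
  have hloc : ∀ t, Function.update π₁ s q t ∈ localNbhd C (π t) := fun t => by
    rcases eq_or_ne t s with rfl | ht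
    · rwa [Function.update_self]
    · rw [Function.update_of_ne ht]
      exact ⟨h₁.1 t, h₁.2.1 t, h₁.2.2 t⟩
  have hupd : InNbhd C π (Function.update π₁ s q) :=
    ⟨fun t => (hloc t).1, fun t => (hloc t).2.1, fun t => (hloc t).2.2⟩
  have hsum : ∑ t, (μ t * ∑ a, π₁ t a * f t a - μ t * ∑ a, Function.update π₁ s q t a * f t a)
      = μ s * (∑ a, π₁ s a * f s a - ∑ a, q a * f s a) := by
    rw [sum_eq_single s (fun t _ ht => by simp [ht]) (by simp)]
    simp [mul_sub]
  have hle := hmax _ hupd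
  rw [← sub_nonneg, ← sum_sub_distrib, hsum] at hle
  exact sub_nonneg.1 (nonneg_of_mul_nonneg_right hle (hμ s))

lemma self_mem_localNbhd {C : ℝ} (hC : 1 ≤ C) {p : A → ℝ} (hp : ∀ a, 0 ≤ p a)
    (hp1 : ∑ a, p a = 1) : p ∈ localNbhd C p :=
  ⟨⟨hp, hp1⟩, fun _ => Iff.rfl, fun a ha => by
    rw [div_self ha.ne']
    constructor <;> linarith⟩

variable {C : ℝ} {p q f : A → ℝ}

lemma mem_localNbhd_iff (hC : C < 2) (hp : ∀ a, 0 < p a) :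
    q ∈ localNbhd C p ↔ ∑ a, q a = 1 ∧ ∀ a, (2 - C) * p a ≤ q a ∧ q a ≤ C * p a := by
  have hratio : ∀ a, (2 - C ≤ q a / p a ∧ q a / p a ≤ C) ↔ (2 - C) * p a ≤ q a ∧ q a ≤ C * p a :=
    fun a => by rw [le_div_iff₀ (hp a), div_le_iff₀ (hp a)]
  constructor
  · rintro ⟨⟨-, h1⟩, -, h⟩
    exact ⟨h1, fun a => (hratio a).1 (h a (hp a))⟩
  · rintro ⟨h1, h⟩
    have hq : ∀ a, 0 < q a := fun a => (mul_pos (by linarith) (hp a)).trans_le (h a).1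
    exact ⟨⟨fun a => (hq a).le, h1⟩, fun a => iff_of_true (hp a) (hq a),
      fun a _ => (hratio a).2 (h a)⟩

lemma mul_one_add_mem_localNbhd (hC1 : 1 < C) (hC2 : C < 2) (hp : ∀ a, 0 < p a)
    (hp1 : ∑ a, p a = 1) {x : A → ℝ} (hx : ∀ a, |x a| ≤ 1) (hx0 : ∑ a, p a * x a = 0) :
    (fun a => p a * (1 + (C - 1) * x a)) ∈ localNbhd C p := by
  rw [mem_localNbhd_iff hC2 hp]
  refine ⟨?_, fun a => ?_⟩
  · simp only [mul_add, mul_one, sum_add_distrib, hp1, mul_left_comm (p _), ← mul_sum, hx0,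
      mul_zero, add_zero]
  · obtain ⟨h1, h2⟩ := abs_le.1 (hx a)
    have hpC : 0 ≤ p a * (C - 1) := mul_nonneg (hp a).le (by linarith)
    constructor <;> nlinarith [mul_nonneg hpC (by linarith : 0 ≤ x a + 1),
      mul_nonneg hpC (by linarith : 0 ≤ 1 - x a)]

lemma IsMaxOn.add_boost_le (hC1 : 1 < C) (hC2 : C < 2) (hp : ∀ a, 0 < p a) (hp1 : ∑ a, p a = 1)
    (hmax : IsMaxOn (fun q => ∑ a, q a * f a) (localNbhd C p) q) (G : Finset A) :
    ∑ a, p a * f a + (C - 1) * (∑ a ∈ G, p a * f a - (∑ a ∈ G, p a) * ∑ a, p a * f a)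
      ≤ ∑ a, q a * f a := by
  classical
  set m := ∑ a ∈ G, p a
  have hm : m ≤ 1 := hp1 ▸ sum_le_sum_of_subset_of_nonneg (subset_univ G) fun a _ _ => (hp a).le
  have hm0 : 0 ≤ m := sum_nonneg fun a _ => (hp a).le
  -- move the fraction `C - 1` of the mass of `p` proportionally onto `G`
  let x : A → ℝ := fun a => (if a ∈ G then 1 else 0) - m
  have hx : ∀ a, |x a| ≤ 1 := fun a => by
    rw [abs_le]
    simp only [x]
    split_ifs <;> constructor <;> linarith
  have hx0 : ∑ a, p a * x a = 0 := by
    simp only [x, mul_sub, mul_ite, mul_one, mul_zero, sum_sub_distrib, sum_ite_mem, univ_inter,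
      ← sum_mul, hp1, one_mul]
    exact sub_self m
  have hterm : ∀ a, p a * (1 + (C - 1) * x a) * f a
      = p a * f a + (C - 1) * ((if a ∈ G then p a * f a else 0) - m * (p a * f a)) := fun a => by
    simp only [x]
    split_ifs <;> ring
  refine (?_ : _ = _).trans_le
    (isMaxOn_iff.1 hmax _ (mul_one_add_mem_localNbhd hC1 hC2 hp hp1 hx hx0))
  rw [sum_congr rfl fun a _ => hterm a, sum_add_distrib, ← mul_sum, sum_sub_distrib, sum_ite_mem,
    univ_inter, ← mul_sum]

lemma IsMaxOn.le_of_lt_of_lt (hC2 : C < 2) (hp : ∀ a, 0 < p a) (hq : q ∈ localNbhd C p)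
    (hmax : IsMaxOn (fun q => ∑ a, q a * f a) (localNbhd C p) q) {a b : A} (hab : f b < f a)
    (ha : q a < C * p a) : q b ≤ (2 - C) * p b := by
  classical
  by_contra! hb
  rw [mem_localNbhd_iff hC2 hp] at hq
  have hne : b ≠ a := fun h => (h ▸ hab).false
  -- shifting mass `ε` from `b` to `a` stays feasible and strictly increases the objective
  set ε := (C * p a - q a) ⊓ (q b - (2 - C) * p b)
  have hε : 0 < ε := lt_inf_iff.2 ⟨by linarith, by linarith⟩
  have hεa : ε ≤ C * p a - q a := inf_le_left
  have hεb : ε ≤ q b - (2 - C) * p b := inf_le_right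
  let q' : A → ℝ := fun c => q c + (if c = a then ε else 0) - (if c = b then ε else 0)
  have hq' : q' ∈ localNbhd C p := by
    rw [mem_localNbhd_iff hC2 hp]
    refine ⟨by simp [q', sum_add_distrib, sum_sub_distrib, hq.1], fun c => ?_⟩
    have := hq.2 c
    have := hq.2 b
    have := hq.2 a
    simp only [q']
    split_ifs <;> subst_vars <;> first | exact absurd rfl hne | constructor <;> linarith
  have hgain : ∑ c, q' c * f c = ∑ c, q c * f c + ε * (f a - f b) := by
    simp only [q', add_mul, sub_mul, ite_mul, zero_mul, sum_add_distrib, sum_sub_distrib,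
      sum_ite_eq', mem_univ, if_true]
    ring
  have := isMaxOn_iff.1 hmax q' hq'
  nlinarith

lemma IsMaxOn.sum_le_sum_of_forall_lt (hC1 : 1 < C) (hC2 : C < 2) (hp : ∀ a, 0 < p a)
    (hp1 : ∑ a, p a = 1) (hq : q ∈ localNbhd C p)
    (hmax : IsMaxOn (fun q => ∑ a, q a * f a) (localNbhd C p) q) {G : Finset A}
    (hG : ∀ a ∈ G, ∀ b ∉ G, f b < f a) : ∑ a ∈ G, p a ≤ ∑ a ∈ G, q a := by
  classical
  by_contra! hlt
  obtain ⟨a, haG, ha⟩ := exists_lt_of_sum_lt hlt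
  have hcompl : ∑ b ∈ Gᶜ, p b < ∑ b ∈ Gᶜ, q b := by
    have hq1 := ((mem_localNbhd_iff hC2 hp).1 hq).1
    rw [← sum_compl_add_sum G] at hp1 hq1
    linarith
  obtain ⟨b, hbG, hb⟩ := exists_lt_of_sum_lt hcompl
  have := hmax.le_of_lt_of_lt hC2 hp hq (hG a haG b (mem_compl.1 hbG)) (by nlinarith [hp a])
  nlinarith [hp b]

end Neighborhood

lemma eventually_forall_lt_of_tendsto {ι : Type*} {l : Filter ι} {f : ι → A → ℝ} {g : A → ℝ}
    (hf : ∀ a, Tendsto (fun n => f n a) l (𝓝 (g a))) {G : Finset A}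
    (hG : ∀ a ∈ G, ∀ b ∉ G, g b < g a) : ∀ᶠ n in l, ∀ a ∈ G, ∀ b ∉ G, f n b < f n a := by
  classical
  filter_upwards [(eventually_all_finset G).2 fun a ha => (eventually_all_finset Gᶜ).2 fun b hb =>
    (hf b).eventually_lt (hf a) (hG a ha b (mem_compl.1 hb))] with n hn a ha b hb
  exact hn a ha b (mem_compl.2 hb)

lemma limit_nonpos_of_isMaxOn_localNbhd {C : ℝ} (hC1 : 1 < C) (hC2 : C < 2) {p : ℕ → A → ℝ}
    (hp : ∀ n a, 0 < p n a) (hp1 : ∀ n, ∑ a, p n a = 1) (hnb : ∀ n, p (n + 1) ∈ localNbhd C (p n))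
    {f : ℕ → A → ℝ} {g : A → ℝ} (hf : ∀ a, Tendsto (fun n => f n a) atTop (𝓝 (g a)))
    (hzero : ∀ n, ∑ a, p n a * f n a = 0)
    (hmax : ∀ n, IsMaxOn (fun q => ∑ a, q a * f n a) (localNbhd C (p n)) (p (n + 1)))
    (hgain : Tendsto (fun n => ∑ a, p (n + 1) a * f n a) atTop (𝓝 0)) (a : A) : g a ≤ 0 := by
  classical
  -- otherwise the mass of `p n` on the argmax set `G` of `g` never decreases, and each step
  -- gains a fixed fraction of it, contradicting `hgain`
  by_contra! hpos
  have : Nonempty A := ⟨a⟩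
  obtain ⟨a₀, ha₀⟩ := Finite.exists_max g
  set G := univ.filter fun b => g b = g a₀
  have hG : ∀ b ∈ G, g b = g a₀ := fun b hb => (mem_filter.1 hb).2
  have hδ : 0 < g a₀ := hpos.trans_le (ha₀ a)
  have hsep := eventually_forall_lt_of_tendsto hf fun b hb c hc =>
    (hG b hb).symm ▸ (ha₀ c).lt_of_ne fun h => hc (mem_filter.2 ⟨mem_univ c, h⟩)
  have hlarge : ∀ᶠ n in atTop, ∀ b ∈ G, g a₀ / 2 < f n b :=
    (eventually_all_finset G).2 fun b hb =>
      (hf b).eventually (lt_mem_nhds (by linarith [hG b hb]))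
  obtain ⟨N, hN⟩ := eventually_atTop.1 (hsep.and hlarge)
  have hmass : ∀ n ≥ N, ∑ b ∈ G, p N b ≤ ∑ b ∈ G, p n b := by
    refine Nat.le_induction le_rfl fun n hn ih => ih.trans ?_
    exact (hmax n).sum_le_sum_of_forall_lt hC1 hC2 (hp n) (hp1 n) (hnb n) (hN n hn).1
  have hmass_pos : 0 < ∑ b ∈ G, p N b :=
    sum_pos (fun b _ => hp N b) ⟨a₀, by simp [G]⟩
  have hbound : ∀ n ≥ N, (C - 1) * (g a₀ / 2 * ∑ b ∈ G, p N b) ≤ ∑ a, p (n + 1) a * f n a := by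
    intro n hn
    have hboost := (hmax n).add_boost_le hC1 hC2 (hp n) (hp1 n) G
    rw [hzero n, mul_zero, sub_zero, zero_add] at hboost
    refine le_trans (mul_le_mul_of_nonneg_left ?_ (by linarith)) hboost
    calc g a₀ / 2 * ∑ b ∈ G, p N b ≤ g a₀ / 2 * ∑ b ∈ G, p n b :=
          mul_le_mul_of_nonneg_left (hmass n hn) (by linarith)
      _ ≤ ∑ b ∈ G, p n b * f n b := by
          rw [mul_sum]
          exact sum_le_sum fun b hb => by nlinarith [(hN n hn).2 b hb, hp n b]
  have hε : 0 < (C - 1) * (g a₀ / 2 * ∑ b ∈ G, p N b) := by positivity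
  obtain ⟨n, hn, hlt⟩ := ((hgain.eventually (gt_mem_nhds hε)).and (eventually_ge_atTop N)).exists
  linarith [hbound n hlt]

theorem policy_improvement_converges_general
    (P : S → A → S → ℝ)
    (hP : ∀ s a, (∀ s', 0 ≤ P s a s') ∧ (∑ s', P s a s') = 1)
    (R : S → A → ℝ) (γ : ℝ) (hγ : 0 ≤ γ ∧ γ < 1)
    (C : ℝ) (hC : 1 < C ∧ C < 2)
    (π : ℕ → S → A → ℝ)
    (hπ0 : IsPolicy (π 0)) (hfull : ∀ s a, 0 < π 0 s a)
    (μ : ℕ → S → ℝ)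
    (hμ : ∀ n, (∀ s, 0 < μ n s) ∧ (∑ s, μ n s) = 1)
    (V : ℕ → S → ℝ)
    (hV : ∀ n s, V n s = ∑ a, π n s a * (R s a + γ * ∑ s', P s a s' * V n s'))
    (hnb : ∀ n, InNbhd C (π n) (π (n + 1)))
    (hopt : ∀ n (π' : S → A → ℝ), InNbhd C (π n) π' →
      (∑ s, μ n s * ∑ a, π' s a * (R s a + γ * (∑ s', P s a s' * V n s') - V n s)) ≤
      (∑ s, μ n s * ∑ a, π (n + 1) s a * (R s a + γ * (∑ s', P s a s' * V n s') - V n s))) :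
    ∀ s, Filter.Tendsto (fun n => V n s) Filter.atTop (nhds (optVal P R γ s)) := by
  obtain ⟨hγ0, hγ1⟩ := hγ
  have hpol : ∀ n, IsPolicy (π n) := fun n => Nat.casesOn n hπ0 fun n => (hnb n).1
  have hpos : ∀ n s a, 0 < π n s a := fun n =>
    Nat.rec hfull (fun n ih s a => ((hnb n).2.1 s a).1 (ih s a)) n
  have hmax : ∀ n s, IsMaxOn (fun q => ∑ a, q a * advantage P R γ (V n) s a)
      (localNbhd C (π n s)) (π (n + 1) s) := fun n =>
    isMaxOn_localNbhd_of_inNbhd (hμ n).1 (hnb n) (hopt n)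
  have hzero : ∀ n s, ∑ a, π n s a * advantage P R γ (V n) s a = 0 := fun n =>
    IsValue.sum_mul_advantage_self (hpol n) (hV n)
  have hgain : ∀ n s, 0 ≤ ∑ a, π (n + 1) s a * advantage P R γ (V n) s a := fun n s =>
    hzero n s ▸ isMaxOn_iff.1 (hmax n s) _ (self_mem_localNbhd hC.1.le (hpol n s).1 (hpol n s).2)
  have himp : ∀ n s, ∑ a, π (n + 1) s a * advantage P R γ (V n) s a ≤ V (n + 1) s - V n s :=
    fun n => IsValue.le_sub_of_sum_mul_advantage_nonneg hP hγ0 hγ1 (hpol _) (hV _) (hgain n)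
  obtain ⟨B, hB⟩ := Finite.exists_le (Function.uncurry R)
  have hlim : ∀ s, Tendsto (fun n => V n s) atTop (𝓝 (⨆ n, V n s)) := fun s =>
    tendsto_atTop_ciSup (monotone_nat_of_le_succ fun n => by linarith [himp n s, hgain n s])
      ⟨B / (1 - γ), by
        rintro _ ⟨n, rfl⟩
        exact IsValue.le_div_of_reward_le hP hγ0 hγ1 (fun s a => hB (s, a)) (hpol n) (hV n) s⟩
  have hstep : ∀ s, Tendsto (fun n => V (n + 1) s - V n s) atTop (𝓝 0) := fun s => by
    simpa using ((hlim s).comp (tendsto_add_atTop_nat 1)).sub (hlim s)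
  have hadv : ∀ s a, advantage P R γ (fun s => ⨆ n, V n s) s a ≤ 0 := fun s =>
    limit_nonpos_of_isMaxOn_localNbhd hC.1 hC.2 (fun n => hpos n s) (fun n => (hpol n s).2)
      (fun n => ⟨(hnb n).1 s, (hnb n).2.1 s, (hnb n).2.2 s⟩)
      (fun a => ((show Continuous fun W : S → ℝ => advantage P R γ W s a by
        unfold advantage; fun_prop).tendsto _).comp (tendsto_pi_nhds.2 hlim))
      (fun n => hzero n s) (fun n => hmax n s)
      (tendsto_of_tendsto_of_tendsto_of_le_of_le tendsto_const_nhds (hstep s)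
        (fun n => hgain n s) (fun n => himp n s))
  exact fun s => optVal_eq_of_tendsto hP hγ0 hγ1 hadv hpol hV (hlim s) ▸ hlim s

/-- convergence of the value functions to the optimal value under
neighborhood-constrained policy improvement. -/
theorem policy_improvement_converges
    [Nonempty S] [Nonempty A]
    (P : S → A → S → ℝ)
    (hP : ∀ s a, (∀ s', 0 ≤ P s a s') ∧ (∑ s', P s a s') = 1)
    (R : S → A → ℝ) (γ : ℝ) (hγ : 0 ≤ γ ∧ γ < 1)
    (C : ℝ) (hC : 1 < C ∧ C < 2)
    (π : ℕ → S → A → ℝ)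
    (hπ0 : IsPolicy (π 0)) (hfull : ∀ s a, 0 < π 0 s a)
    (μ : ℕ → S → ℝ)
    (hμ : ∀ n, (∀ s, 0 < μ n s) ∧ (∑ s, μ n s) = 1)
    (V : ℕ → S → ℝ)
    (hV : ∀ n s, V n s = ∑ a, π n s a * (R s a + γ * ∑ s', P s a s' * V n s'))
    (hnb : ∀ n, InNbhd C (π n) (π (n + 1)))
    (hopt : ∀ n (π' : S → A → ℝ), InNbhd C (π n) π' →
      (∑ s, μ n s * ∑ a, π' s a * (R s a + γ * (∑ s', P s a s' * V n s') - V n s)) ≤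
      (∑ s, μ n s * ∑ a, π (n + 1) s a * (R s a + γ * (∑ s', P s a s' * V n s') - V n s))) :
    ∀ s, Filter.Tendsto (fun n => V n s) Filter.atTop (nhds (optVal P R γ s)) :=
  policy_improvement_converges_general P hP R γ hγ C hC π hπ0 hfull μ hμ V hV hnb hopt
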